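/- arXiv:2307.16234 — 2 statements merged into one kernel-verified Lean document; each statement's English description precedes it below -/
import Mathlib

section
/- Let η = η₁ = Σ_{h ∈ H} ζ^h be the Gauss period of the identity coset, where H has order f and e = (λ−1)/f. Then the degree of the field extension [ℚ(η) : ℚ] equals e; equivalently, the minimal polynomial of η over ℚ has degree e. -/
/-!
The Galois group of `ℚ(ζ)/ℚ` is `(ℤ/λℤ)ˣ`, with `σ_a(η_c) = η_{ac}`. The conjugates
`ζ, ζ², …, ζ^(λ-1)` are `ζ` times a power basis, hence linearly independent over `ℚ`, so
`η_c = η_d` exactly when `cH = dH`. Thus the stabiliser of `η = η_1` corresponds to `H`, and by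
Galois theory `[ℚ(η) : ℚ]` is the index of `H` in `(ℤ/λℤ)ˣ`, namely `(λ - 1)/f`.
-/

open scoped BigOperators

/-- The Gauss period `η_c = ∑_{h ∈ H} ζ^(c·h)` attached to a unit `c` modulo `λ`. -/
noncomputable def gaussPeriod (l : ℕ+) (ζ : CyclotomicField l ℚ)
    (H : Subgroup (ZMod (l : ℕ))ˣ) [Fintype H] (c : (ZMod (l : ℕ))ˣ) :
    CyclotomicField l ℚ :=
  ∑ h : H, ζ ^ (((c * (h : (ZMod (l : ℕ))ˣ) : (ZMod (l : ℕ))ˣ) : ZMod (l : ℕ)).val)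

open Polynomial IsCyclotomicExtension.Rat

theorem ZMod.pow_val_mul_of_pow_eq_one {M : Type*} [Monoid M] {n : ℕ} {x : M} (hx : x ^ n = 1) (a b : ZMod n) :
    x ^ (a * b).val = x ^ (a.val * b.val) := by
  rw [ZMod.val_mul, ← pow_eq_pow_mod _ hx]

theorem IsPrimitiveRoot.linearIndependent_pow_val_units {K L : Type*} [Field K] [CommRing L]
    [IsDomain L] [Algebra K L] {p : ℕ} [hp : Fact p.Prime] [NeZero (p : K)] {ζ : L}
    (hζ : IsPrimitiveRoot ζ p) (hirr : Irreducible (cyclotomic p K)) :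
    LinearIndependent K (fun u : (ZMod p)ˣ => ζ ^ (u : ZMod p).val) := by
  have hdeg : (minpoly K ζ).natDegree = p - 1 := by
    rw [← hζ.minpoly_eq_cyclotomic_of_irreducible hirr, natDegree_cyclotomic,
      Nat.totient_prime hp.out]
  have hpos (u : (ZMod p)ˣ) : 0 < (u : ZMod p).val := ZMod.val_pos.mpr u.ne_zero
  have hlt (u : (ZMod p)ˣ) : (u : ZMod p).val < p := ZMod.val_lt _
  let pred (u : (ZMod p)ˣ) : Fin (minpoly K ζ).natDegree :=
    ⟨(u : ZMod p).val - 1, by have := hpos u; have := hlt u; omega⟩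
  have hpred : Function.Injective pred := fun u v huv =>
    Units.ext <| ZMod.val_injective _ <| by
      have : (u : ZMod p).val - 1 = (v : ZMod p).val - 1 := Fin.val_eq_of_eq huv
      have := hpos u; have := hpos v; omega
  have hmul : LinearMap.ker (LinearMap.mulLeft K ζ) = ⊥ :=
    LinearMap.ker_eq_bot.mpr (mul_right_injective₀ (hζ.ne_zero hp.out.ne_zero))
  have hshift : (fun u : (ZMod p)ˣ => ζ ^ (u : ZMod p).val) =
      (fun i : Fin (minpoly K ζ).natDegree => ζ * ζ ^ (i : ℕ)) ∘ pred := by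
    funext u
    simp only [Function.comp_apply, pred, ← pow_succ', Nat.sub_add_cancel (hpos u)]
  rw [hshift]
  exact ((linearIndependent_pow ζ).map' _ hmul).comp pred hpred

namespace IntermediateField

theorem mem_fixingSubgroup_adjoin_simple_iff {F E : Type*} [Field F] [Field E]
    [Algebra F E] {x : E} {σ : Gal(E/F)} : σ ∈ F⟮x⟯.fixingSubgroup ↔ σ x = x := by
  rw [mem_fixingSubgroup_iff]
  refine ⟨fun h => h x (mem_adjoin_simple_self F x), fun h y hy => ?_⟩
  have hext : (σ : E →ₐ[F] E).comp F⟮x⟯.val = F⟮x⟯.val :=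
    adjoin_algHom_ext F (by simpa using h)
  exact congr($hext ⟨y, hy⟩)

end IntermediateField

/-- Instance search misses this: `CyclotomicField.algebra` and `DivisionRing.toRatAlgebra` are
not reducibly defeq. -/
instance (l : ℕ+) : IsCyclotomicExtension {(l : ℕ)} ℚ (CyclotomicField l ℚ) :=
  CyclotomicField.isCyclotomicExtension _ _

section GaussPeriod

variable {l : ℕ+} {ζ : CyclotomicField l ℚ} {H : Subgroup (ZMod (l : ℕ))ˣ} [Fintype H]

theorem gaussPeriod_eq_sum_ite_smul [DecidablePred (· ∈ H)] (c : (ZMod (l : ℕ))ˣ) :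
    gaussPeriod l ζ H c =
      ∑ u : (ZMod (l : ℕ))ˣ, (if c⁻¹ * u ∈ H then 1 else 0 : ℚ) • ζ ^ (u : ZMod (l : ℕ)).val := by
  calc gaussPeriod l ζ H c
      = ∑ v : (ZMod (l : ℕ))ˣ, if v ∈ H then ζ ^ ((c * v : (ZMod (l : ℕ))ˣ) : ZMod (l : ℕ)).val
          else 0 := by
        rw [← Finset.sum_filter, Finset.sum_subtype (p := (· ∈ H)) _ (by simp)]
        rfl
    _ = ∑ u : (ZMod (l : ℕ))ˣ, if c⁻¹ * u ∈ H then ζ ^ (u : ZMod (l : ℕ)).val else 0 :=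
        Fintype.sum_equiv (Equiv.mulLeft c) _ _ (by simp)
    _ = _ := Finset.sum_congr rfl fun u _ => by
      split_ifs
      · exact (one_smul ℚ _).symm
      · exact (zero_smul ℚ _).symm

theorem gaussPeriod_eq_gaussPeriod_iff (hl : (l : ℕ).Prime) (hζ : IsPrimitiveRoot ζ l)
    {c d : (ZMod (l : ℕ))ˣ} : gaussPeriod l ζ H c = gaussPeriod l ζ H d ↔ c⁻¹ * d ∈ H := by
  classical
  have := Fact.mk hl
  rw [gaussPeriod_eq_sum_ite_smul, gaussPeriod_eq_sum_ite_smul]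
  constructor
  · intro h
    have := Fintype.linearIndependent_iffₛ.mp
      (hζ.linearIndependent_pow_val_units (cyclotomic.irreducible_rat l.pos)) _ _ h d
    simpa using this
  · intro h
    congr! 3 with u
    rw [show d⁻¹ * u = (c⁻¹ * d)⁻¹ * (c⁻¹ * u) by group, H.mul_mem_cancel_left (H.inv_mem h)]

theorem algEquiv_apply_gaussPeriod (hζ : ζ ^ (l : ℕ) = 1) (σ : Gal(CyclotomicField l ℚ/ℚ))
    (c : (ZMod (l : ℕ))ˣ) :
    σ (gaussPeriod l ζ H c) = gaussPeriod l ζ H (galEquivZMod l _ σ * c) := by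
  simp only [gaussPeriod, map_sum, map_pow, galEquivZMod_apply_of_pow_eq _ _ σ hζ, ← pow_mul,
    mul_assoc, Units.val_mul, ZMod.pow_val_mul_of_pow_eq_one hζ (galEquivZMod l _ σ : ZMod l)]

theorem fixingSubgroup_adjoin_gaussPeriod_one (hl : (l : ℕ).Prime) (hζ : IsPrimitiveRoot ζ l) :
    (IntermediateField.adjoin ℚ {gaussPeriod l ζ H 1}).fixingSubgroup =
      H.comap (galEquivZMod l (CyclotomicField l ℚ)).toMonoidHom := by
  ext σ
  rw [Subgroup.mem_comap, MulEquiv.coe_toMonoidHom,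
    IntermediateField.mem_fixingSubgroup_adjoin_simple_iff,
    algEquiv_apply_gaussPeriod hζ.pow_eq_one, mul_one, eq_comm, gaussPeriod_eq_gaussPeriod_iff hl hζ, inv_one, one_mul]

end GaussPeriod

/-- The field `ℚ(η)` generated by the Gauss period `η = η₁` (for a subgroup `H` of
order `f`) has degree `e = (λ - 1)/f` over `ℚ`. -/
theorem finrank_adjoin_gaussPeriod (l : ℕ+) (hl : (l : ℕ).Prime)
    (ζ : CyclotomicField l ℚ) (hζ : IsPrimitiveRoot ζ l)
    (H : Subgroup (ZMod (l : ℕ))ˣ) [Fintype H] (f e : ℕ) (hf : Fintype.card H = f)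
    (he : e = ((l : ℕ) - 1) / f) :
    Module.finrank ℚ (IntermediateField.adjoin ℚ {gaussPeriod l ζ H 1}) = e := by
  have := Fact.mk hl
  have := IsCyclotomicExtension.isGalois {(l : ℕ)} ℚ (CyclotomicField l ℚ)
  have hindex : H.index * f = (l : ℕ) - 1 := by
    rw [← hf, ← Nat.card_eq_fintype_card, H.index_mul_card, Nat.card_eq_fintype_card,
      ZMod.card_units]
  rw [he, ← hindex, Nat.mul_div_cancel _ (hf ▸ Fintype.card_pos),
    IntermediateField.finrank_eq_fixingSubgroup_index, fixingSubgroup_adjoin_gaussPeriod_one hl hζ,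
    Subgroup.index_comap_of_surjective _ (MulEquiv.surjective _)]
end

section
/- Let η = η₁ = Σ_{h ∈ H} ζ^h be the Gauss period of the identity coset, where H has order f and e = (λ−1)/f. Then the degree of the field extension [K : ℚ(η)] equals f. -/
/-!
The Galois group of `K = ℚ(ζ)` is `(ℤ/λℤ)ˣ`, with `c` acting by `σ_c ζ = ζ ^ c`, and
`σ_c η₁ = η_c`. Since `ζ, ζ², …, ζ^(λ-1)` is `ζ` times the power basis `1, ζ, …, ζ^(λ-2)`,
these powers are linearly independent over `ℚ`; comparing coefficients, `η_c = η₁` forces the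
cosets `cH` and `H` to coincide. So the stabilizer of `η₁`, which is `Gal(K/ℚ(η₁))`, corresponds
to `H`, and `[K : ℚ(η₁)] = |H| = f`.
-/

open scoped BigOperators

open Polynomial IntermediateField

theorem linearIndependent_pow_succ {K S : Type*} [Field K] [CommRing S] [IsDomain S]
    [Algebra K S] {x : S} (hx : x ≠ 0) :
    LinearIndependent K fun i : Fin (minpoly K x).natDegree => x ^ ((i : ℕ) + 1) := by
  have hmul : Function.Injective (LinearMap.mulRight K x) := fun _ _ h => mul_right_cancel₀ hx h
  simpa only [Function.comp_def, LinearMap.mulRight_apply, pow_succ] using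
    (linearIndependent_pow x).map' _ (LinearMap.ker_eq_bot.mpr hmul)

theorem IsPrimitiveRoot.linearIndependent_pow_units {K L : Type*} [Field K] [CommRing L]
    [IsDomain L] [Algebra K L] {p : ℕ} [hp : Fact p.Prime] {ζ : L} (hζ : IsPrimitiveRoot ζ p)
    (hirr : Irreducible (cyclotomic p K)) :
    LinearIndependent K fun a : (ZMod p)ˣ => ζ ^ (a : ZMod p).val := by
  have : NeZero p := ⟨hp.out.ne_zero⟩
  have : NeZero (algebraMap K L p) := by rw [map_natCast]; exact hζ.neZero'
  have : NeZero (p : K) := NeZero.of_map (algebraMap K L)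
  have hdeg : (minpoly K ζ).natDegree = p - 1 := by
    rw [← hζ.minpoly_eq_cyclotomic_of_irreducible hirr, natDegree_cyclotomic,
      Nat.totient_prime hp.out]
  have hval (a : (ZMod p)ˣ) : 0 < (a : ZMod p).val := ZMod.val_pos.mpr a.ne_zero
  let idx (a : (ZMod p)ˣ) : Fin (minpoly K ζ).natDegree :=
    ⟨(a : ZMod p).val - 1, by have := (a : ZMod p).val_lt; have := hval a; omega⟩
  have hidx : Function.Injective idx := fun a b h => by
    have := hval a; have := hval b
    exact Units.ext (ZMod.val_injective _ (by simp only [idx, Fin.mk.injEq] at h; omega))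
  convert (linearIndependent_pow_succ (K := K) (hζ.ne_zero hp.out.ne_zero)).comp idx hidx
    using 2 with a
  simp only [Function.comp_apply, idx]
  have := hval a
  congr 1
  omega

theorem IsPrimitiveRoot.autToPow_bijective {K L : Type*} [Field K] [CommRing L]
    [IsDomain L] [Algebra K L] {n : ℕ} [NeZero n] [IsCyclotomicExtension {n} K L] {ζ : L}
    (hζ : IsPrimitiveRoot ζ n) (hirr : Irreducible (cyclotomic n K)) :
    Function.Bijective (hζ.autToPow K) :=
  (hζ.autToPow_injective K).bijective_of_nat_card_le
    (Nat.card_congr (IsCyclotomicExtension.autEquivPow L hirr).toEquiv).ge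

theorem Subgroup.card_comap_of_bijective {G G' : Type*} [Group G] [Group G'] {φ : G →* G'}
    (hφ : Function.Bijective φ) (H : Subgroup G') : Nat.card (H.comap φ) = Nat.card H :=
  Nat.card_congr ((Equiv.ofBijective φ hφ).subtypeEquiv fun _ => Iff.rfl)

theorem IntermediateField.fixingSubgroup_adjoin_simple {F E : Type*} [Field F] [Field E]
    [Algebra F E] (x : E) : F⟮x⟯.fixingSubgroup = MulAction.stabilizer Gal(E/F) x := by
  refine le_antisymm (fun σ hσ => hσ ⟨x, mem_adjoin_simple_self F x⟩) ?_
  rw [← le_iff_le, adjoin_simple_le_iff]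
  exact fun τ => τ.2

section GaussPeriod

variable {l : ℕ+} {ζ : CyclotomicField l ℚ} (H : Subgroup (ZMod (l : ℕ))ˣ) [Fintype H]

theorem gaussPeriod_eq_sum_ite [DecidablePred (· ∈ H)] (c : (ZMod (l : ℕ))ˣ) :
    gaussPeriod l ζ H c = ∑ a, if c⁻¹ * a ∈ H then ζ ^ (a : ZMod (l : ℕ)).val else 0 := by
  rw [← Equiv.sum_comp (Equiv.mulLeft c)]
  simp only [Equiv.coe_mulLeft, inv_mul_cancel_left]
  rw [← Finset.sum_filter, Finset.sum_subtype _ (fun _ => Finset.mem_filter_univ _)]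
  rfl

theorem gaussPeriod_eq_gaussPeriod_one_iff [Fact (l : ℕ).Prime] (hζ : IsPrimitiveRoot ζ l)
    (c : (ZMod (l : ℕ))ˣ) : gaussPeriod l ζ H c = gaussPeriod l ζ H 1 ↔ c ∈ H := by
  classical
  refine ⟨fun h => ?_, fun hc => ?_⟩
  · rw [gaussPeriod_eq_sum_ite H c, gaussPeriod_eq_sum_ite H 1, ← sub_eq_zero,
      ← Finset.sum_sub_distrib] at h
    have hcoeff := Fintype.linearIndependent_iff.mp
      (hζ.linearIndependent_pow_units (cyclotomic.irreducible_rat l.pos))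
      (fun a => (if c⁻¹ * a ∈ H then 1 else 0) - (if 1⁻¹ * a ∈ H then 1 else 0))
      (by simpa only [sub_smul, ite_smul, one_smul, zero_smul] using h) c
    by_contra hc
    simp [hc] at hcoeff
  · exact Fintype.sum_equiv (Equiv.mulLeft ⟨c, hc⟩) _ _ fun h => by simp

theorem apply_gaussPeriod (hζ : IsPrimitiveRoot ζ l) (σ : Gal(CyclotomicField l ℚ/ℚ))
    (c : (ZMod (l : ℕ))ˣ) :
    σ (gaussPeriod l ζ H c) = gaussPeriod l ζ H (hζ.autToPow ℚ σ * c) := by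
  simp only [gaussPeriod, map_sum, map_pow, ← hζ.autToPow_spec ℚ σ, ← pow_mul, mul_assoc]
  refine Finset.sum_congr rfl fun h _ => ?_
  rw [pow_eq_pow_mod _ hζ.pow_eq_one, ← ZMod.val_mul, ← Units.val_mul]

theorem stabilizer_gaussPeriod [Fact (l : ℕ).Prime] (hζ : IsPrimitiveRoot ζ l) :
    MulAction.stabilizer Gal(CyclotomicField l ℚ/ℚ) (gaussPeriod l ζ H 1) =
      H.comap (hζ.autToPow ℚ) := by
  ext σ
  rw [MulAction.mem_stabilizer_iff, AlgEquiv.smul_def, apply_gaussPeriod H hζ, mul_one,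
    Subgroup.mem_comap, gaussPeriod_eq_gaussPeriod_one_iff H hζ]

end GaussPeriod

theorem finrank_over_adjoin_gaussPeriod_general (l : ℕ+) (hl : (l : ℕ).Prime)
    (ζ : CyclotomicField l ℚ) (hζ : IsPrimitiveRoot ζ l)
    (H : Subgroup (ZMod (l : ℕ))ˣ) [Fintype H] (f : ℕ) (hf : Fintype.card H = f) :
    Module.finrank (IntermediateField.adjoin ℚ {gaussPeriod l ζ H 1})
      (CyclotomicField l ℚ) = f := by
  have : Fact (l : ℕ).Prime := ⟨hl⟩
  have : IsCyclotomicExtension {(l : ℕ)} ℚ (CyclotomicField l ℚ) :=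
    CyclotomicField.isCyclotomicExtension l ℚ
  have := IsCyclotomicExtension.isGalois {(l : ℕ)} ℚ (CyclotomicField l ℚ)
  rw [← IsGalois.card_fixingSubgroup_eq_finrank, fixingSubgroup_adjoin_simple,
    stabilizer_gaussPeriod H hζ, Subgroup.card_comap_of_bijective
      (hζ.autToPow_bijective (cyclotomic.irreducible_rat l.pos)), Nat.card_eq_fintype_card, hf]

/-- The cyclotomic field has degree `f` over the field `ℚ(η)` generated by the Gauss
period `η = η₁` attached to a subgroup `H` of order `f`. -/
theorem finrank_over_adjoin_gaussPeriod (l : ℕ+) (hl : (l : ℕ).Prime)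
    (ζ : CyclotomicField l ℚ) (hζ : IsPrimitiveRoot ζ l)
    (H : Subgroup (ZMod (l : ℕ))ˣ) [Fintype H] (f e : ℕ) (hf : Fintype.card H = f)
    (he : e = ((l : ℕ) - 1) / f) :
    Module.finrank (IntermediateField.adjoin ℚ {gaussPeriod l ζ H 1})
      (CyclotomicField l ℚ) = f :=
  finrank_over_adjoin_gaussPeriod_general l hl ζ hζ H f hf
end
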